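/- arXiv:2111.01085 — 2 statements merged into one kernel-verified Lean document; each statement's English description precedes it below -/
import Mathlib

section
/- Let I be an Ulrich ideal of A = k⟦t⁵, t¹¹⟧ admitting elements f, g ∈ I with I = (f, g), I² = fI, o(f) = 20 and o(g) = 26. Set ξ = g/f ∈ V and B = I : I = A + Aξ (the blow-up algebra of I, a subring of V). Then the value semigroup v(B) = { o(h) : 0 ≠ h ∈ B } equals the numerical semigroup ⟨5, 6⟩ generated by 5 and 6, B is the closed k-subalgebra of V generated by t⁵ and ξ, and t⁶ ∉ B; in particular, B is not the semigroup ring of any numerical semigroup. -/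
/-!
From `I² = fI` we get `g² ∈ f·(f, g)`, so `ξ = g/f` satisfies `ξ² = p + qξ` with `p, q ∈ A`;
hence `B = A + Aξ` is a ring and `fB ⊆ A`. As `o(ξ) = 6`, for every value `n` of `B` the numbers
`20 + n + 6j` are values of `A`, and for `j < 4` this forces `n ∈ ⟨5, 6⟩`; conversely `t⁵, ξ ∈ B`.
Since `k[t⁵, ξ]` already attains every value of `B`, successive approximation puts `B` in its
`t`-adic closure, and `t⁴⁰V ⊆ A ⊆ B` makes `B` closed. Every `s ∈ B` satisfies `s² ∈ A + sA`;
for `s = t⁶` the coefficient of `t¹²` then reads `1 = 0`, because `6, 12 ∉ ⟨5, 11⟩`. Finally a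
semigroup ring containing `ξ` contains `t⁶`.
-/

noncomputable section

open PowerSeries

set_option synthInstance.maxHeartbeats 400000
set_option maxHeartbeats 800000

variable (k : Type*) [Field k]

/-- The subalgebra of `k⟦t⟧` consisting of power series supported on an
additive submonoid `S ⊆ ℕ` (the "semigroup ring" of `S`). -/
def semigroupRing (S : AddSubmonoid ℕ) : Subalgebra k (PowerSeries k) where
  carrier := {f | ∀ n : ℕ, coeff n f ≠ 0 → n ∈ S}
  zero_mem' := by intro n hn; simp at hn
  add_mem' := by
    intro f g hf hg n hn
    by_contra h
    exact hn (by
      rw [map_add, of_not_not fun h1 => h (hf n h1), of_not_not fun h2 => h (hg n h2), add_zero])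
  one_mem' := by
    intro n hn
    rw [coeff_one] at hn
    simp only [ne_eq, ite_eq_right_iff, not_forall] at hn
    exact hn.1 ▸ S.zero_mem
  mul_mem' := by
    intro f g hf hg n hn
    rw [coeff_mul] at hn
    obtain ⟨p, hp, hne⟩ := Finset.exists_ne_zero_of_sum_ne_zero hn
    rw [Finset.HasAntidiagonal.mem_antidiagonal] at hp
    exact hp ▸ S.add_mem (hf p.1 (left_ne_zero_of_mul hne)) (hg p.2 (right_ne_zero_of_mul hne))
  algebraMap_mem' := by
    intro a n hn
    have : (algebraMap k (PowerSeries k)) a = C a := rfl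
    rw [this, coeff_C] at hn
    simp only [ne_eq, ite_eq_right_iff, not_forall] at hn
    exact hn.1 ▸ S.zero_mem

lemma X_pow_mem {S : AddSubmonoid ℕ} {n : ℕ} (hn : n ∈ S) :
    (X : PowerSeries k) ^ n ∈ semigroupRing k S := by
  intro m hm
  rw [coeff_X_pow] at hm
  simp only [ne_eq, ite_eq_right_iff, not_forall] at hm
  exact hm.1 ▸ hn

/-- The maximal ideal of a subalgebra of `k⟦t⟧`: the kernel of the constant-coefficient map. -/
def maximalIdealOf (A : Subalgebra k (PowerSeries k)) : Ideal A :=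
  RingHom.ker ((constantCoeff (R := k)).comp A.val.toRingHom)

/-- `I` is an Ulrich ideal of `A`: `I` is `m`-primary, and there is `a ∈ I` such that `(a)`
is a reduction of `I`, `I ≠ (a)`, `I² = aI`, and `I/I²` is a free `A/I`-module. -/
def IsUlrichIdeal (A : Subalgebra k (PowerSeries k)) (I : Ideal A) : Prop :=
  I.IsPrimary ∧ I.radical = maximalIdealOf k A ∧
  ∃ a ∈ I, (∃ n : ℕ, I ^ (n + 1) = Ideal.span {a} * I ^ n) ∧
    I ≠ Ideal.span {a} ∧
    I ^ 2 = Ideal.span {a} * I ∧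
    Module.Free (A ⧸ I) I.Cotangent

/-- `A = k⟦t⁵, t¹¹⟧`. -/
def A511 : Subalgebra k (PowerSeries k) :=
  semigroupRing k (AddSubmonoid.closure ({5, 11} : Set ℕ))

lemma mem511 {n : ℕ} (a b : ℕ) (h : a * 5 + b * 11 = n) :
    n ∈ AddSubmonoid.closure ({5, 11} : Set ℕ) := by
  subst h
  have h5 : (5 : ℕ) ∈ AddSubmonoid.closure ({5, 11} : Set ℕ) :=
    AddSubmonoid.subset_closure (by norm_num)
  have h11 : (11 : ℕ) ∈ AddSubmonoid.closure ({5, 11} : Set ℕ) :=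
    AddSubmonoid.subset_closure (by norm_num)
  simpa [smul_eq_mul] using add_mem (nsmul_mem h5 a) (nsmul_mem h11 b)

/-- `f = t²⁰ + αt²¹ + βt²² + γt²⁷ + δt³³` as an element of `A = k⟦t⁵,t¹¹⟧`. -/
def genF (α β γ δ : k) : A511 k :=
  ⟨X ^ 20 + α • X ^ 21 + β • X ^ 22 + γ • X ^ 27 + δ • X ^ 33, by
    refine add_mem (add_mem (add_mem (add_mem (X_pow_mem k (mem511 4 0 (by norm_num)))
      (Subalgebra.smul_mem _ (X_pow_mem k (mem511 2 1 (by norm_num))) α))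
      (Subalgebra.smul_mem _ (X_pow_mem k (mem511 0 2 (by norm_num))) β))
      (Subalgebra.smul_mem _ (X_pow_mem k (mem511 1 2 (by norm_num))) γ))
      (Subalgebra.smul_mem _ (X_pow_mem k (mem511 0 3 (by norm_num))) δ)⟩

/-- `g = t²⁶ + εt²⁷ + τt³³` as an element of `A = k⟦t⁵,t¹¹⟧`. -/
def genG (ε τ : k) : A511 k :=
  ⟨X ^ 26 + ε • X ^ 27 + τ • X ^ 33, by
    refine add_mem (add_mem (X_pow_mem k (mem511 3 1 (by norm_num)))
      (Subalgebra.smul_mem _ (X_pow_mem k (mem511 1 2 (by norm_num))) ε))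
      (Subalgebra.smul_mem _ (X_pow_mem k (mem511 0 3 (by norm_num))) τ)⟩

/-- `f = t¹⁰ + α₁t¹¹ + α₂t¹⁶ + α₃t²²` as an element of `A = k⟦t⁵,t¹¹⟧`. -/
def genF10 (α₁ α₂ α₃ : k) : A511 k :=
  ⟨X ^ 10 + α₁ • X ^ 11 + α₂ • X ^ 16 + α₃ • X ^ 22, by
    refine add_mem (add_mem (add_mem (X_pow_mem k (mem511 2 0 (by norm_num)))
      (Subalgebra.smul_mem _ (X_pow_mem k (mem511 0 1 (by norm_num))) α₁))
      (Subalgebra.smul_mem _ (X_pow_mem k (mem511 1 1 (by norm_num))) α₂))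
      (Subalgebra.smul_mem _ (X_pow_mem k (mem511 0 2 (by norm_num))) α₃)⟩

/-- `g = t²⁷` as an element of `A = k⟦t⁵,t¹¹⟧`. -/
def genG27 : A511 k :=
  ⟨X ^ 27, X_pow_mem k (mem511 1 2 (by norm_num))⟩

/-- `t³² + εt³³` as an element of `A = k⟦t⁵,t¹¹⟧`. -/
def elt32 (ε : k) : A511 k :=
  ⟨X ^ 32 + ε • X ^ 33, by
    refine add_mem (X_pow_mem k (mem511 2 2 (by norm_num)))
      (Subalgebra.smul_mem _ (X_pow_mem k (mem511 0 3 (by norm_num))) ε)⟩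

-- As `6 ≡ 11 ≡ 1 [MOD 5]`, writing `n` in `⟨5, 6⟩` (in `⟨5, 11⟩`) takes at least `n % 5` copies
-- of `6` (of `11`).
theorem mem_closure_five_eleven_of_le {n : ℕ} (hn : 40 ≤ n) :
    n ∈ AddSubmonoid.closure ({5, 11} : Set ℕ) :=
  mem511 ((n - 11 * (n % 5)) / 5) (n % 5) (by omega)

theorem mem_closure_five_six_of_add_mem {n : ℕ}
    (h : ∀ j < 4, 20 + (n + 6 * j) ∈ AddSubmonoid.closure ({5, 11} : Set ℕ)) :
    n ∈ AddSubmonoid.closure ({5, 6} : Set ℕ) := by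
  simp only [AddSubmonoid.mem_closure_pair, smul_eq_mul] at h ⊢
  obtain ⟨a₀, b₀, h₀⟩ := h 0 (by norm_num)
  obtain ⟨a₁, b₁, h₁⟩ := h 1 (by norm_num)
  obtain ⟨a₂, b₂, h₂⟩ := h 2 (by norm_num)
  obtain ⟨a₃, b₃, h₃⟩ := h 3 (by norm_num)
  have hle : 6 * (n % 5) ≤ n := by
    by_contra! hlt
    have : n < 24 := by omega
    interval_cases n <;> omega
  exact ⟨(n - 6 * (n % 5)) / 5, n % 5, by omega⟩

section PowerSeries

variable {k}

theorem order_eq_of_mul_eq {f g ξ : PowerSeries k} {a b : ℕ} (hf : order f = a)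
    (hg : order g = (a + b : ℕ)) (h : f * ξ = g) : order ξ = b := by
  rw [← h, order_mul, hf, Nat.cast_add] at hg
  exact ENat.add_right_injective_of_ne_top (ENat.natCast_ne_top a) hg

theorem coeff_eq_zero_of_mem_semigroupRing {S : AddSubmonoid ℕ} {x : PowerSeries k}
    (hx : x ∈ semigroupRing k S) {n : ℕ} (hn : n ∉ S) : coeff n x = 0 :=
  not_not.mp fun h => hn (hx n h)

theorem mem_semigroupRing_of_X_pow_dvd {S : AddSubmonoid ℕ} {c : ℕ}
    (hS : ∀ n, c ≤ n → n ∈ S) {x : PowerSeries k} (hx : X ^ c ∣ x) : x ∈ semigroupRing k S := by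
  intro n hn
  by_contra hnS
  exact hn (X_pow_dvd_iff.mp hx n (by_contra fun h => hnS (hS n (not_lt.mp h))))

def valueSemigroup (B : Subalgebra k (PowerSeries k)) : AddSubmonoid ℕ where
  carrier := {n | ∃ h ∈ B, h ≠ 0 ∧ order h = n}
  zero_mem' := ⟨1, one_mem B, one_ne_zero, by simp⟩
  add_mem' := by
    rintro m n ⟨x, hxB, hx0, hxm⟩ ⟨y, hyB, hy0, hyn⟩
    refine ⟨x * y, mul_mem hxB hyB, mul_ne_zero hx0 hy0, ?_⟩
    rw [order_mul, hxm, hyn]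
    push_cast
    rfl

theorem mem_valueSemigroup {B : Subalgebra k (PowerSeries k)} {x : PowerSeries k} (hx : x ∈ B)
    {n : ℕ} (hn : order x = n) : n ∈ valueSemigroup B :=
  ⟨x, hx, fun h => by simp [h] at hn, hn⟩

theorem valueSemigroup_semigroupRing_le (S : AddSubmonoid ℕ) :
    valueSemigroup (semigroupRing k S) ≤ S := by
  rintro n ⟨x, hx, -, hn⟩
  exact hx n (order_eq_nat.mp hn).1

theorem add_mem_valueSemigroup_of_mul_mem {A B : Subalgebra k (PowerSeries k)}
    {f : PowerSeries k} {d : ℕ} (hf : order f = d) (hfB : ∀ x ∈ B, f * x ∈ A) {n : ℕ}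
    (hn : n ∈ valueSemigroup B) : d + n ∈ valueSemigroup A := by
  obtain ⟨x, hx, -, hxn⟩ := hn
  exact mem_valueSemigroup (hfB x hx) (by rw [order_mul, hf, hxn]; push_cast; rfl)

theorem X_pow_succ_dvd_sub_smul {m : ℕ} {w z : PowerSeries k} (hw : X ^ m ∣ w)
    (hz : X ^ m ∣ z) (hzm : coeff m z ≠ 0) : X ^ (m + 1) ∣ w - (coeff m w / coeff m z) • z := by
  rw [X_pow_dvd_iff] at hw hz ⊢
  intro i hi
  rcases (Nat.lt_succ_iff.mp hi).lt_or_eq with hi | rfl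
  · simp [hw i hi, hz i hi]
  · simp [hzm]

theorem exists_mem_X_pow_dvd_sub {R B : Subalgebra k (PowerSeries k)} (hRB : R ≤ B)
    (hv : valueSemigroup B ≤ valueSemigroup R) {x : PowerSeries k} (hx : x ∈ B) (m : ℕ) :
    ∃ y ∈ R, X ^ m ∣ x - y := by
  induction m with
  | zero => exact ⟨0, zero_mem R, by simp⟩
  | succ m ih =>
    obtain ⟨y, hyR, hdvd⟩ := ih
    by_cases hwm : coeff m (x - y) = 0
    · refine ⟨y, hyR, X_pow_dvd_iff.mpr fun i hi => ?_⟩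
      rcases (Nat.lt_succ_iff.mp hi).lt_or_eq with hi | rfl
      exacts [X_pow_dvd_iff.mp hdvd i hi, hwm]
    · have hord : order (x - y) = m := order_eq_nat.mpr ⟨hwm, X_pow_dvd_iff.mp hdvd⟩
      obtain ⟨z, hzR, -, hzm⟩ := hv (mem_valueSemigroup (sub_mem hx (hRB hyR)) hord)
      have hz := order_eq_nat.mp hzm
      refine ⟨y + (coeff m (x - y) / coeff m z) • z,
        add_mem hyR (Subalgebra.smul_mem R hzR _), ?_⟩
      rw [← sub_sub]
      exact X_pow_succ_dvd_sub_smul hdvd (X_pow_dvd_iff.mpr hz.2) hz.1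

end PowerSeries

namespace Subalgebra

variable {R S : Type*} [CommRing R] [CommRing S] [Algebra R S] (A : Subalgebra R S)
  {ξ : S} {p q : A}

def adjoinQuadratic (hξ : ξ ^ 2 = p + q * ξ) : Subalgebra R S where
  carrier := {x | ∃ a b : A, x = a + b * ξ}
  zero_mem' := ⟨0, 0, by simp⟩
  add_mem' := by
    rintro _ _ ⟨a, b, rfl⟩ ⟨c, d, rfl⟩
    exact ⟨a + c, b + d, by push_cast; ring⟩
  mul_mem' := by
    rintro _ _ ⟨a, b, rfl⟩ ⟨c, d, rfl⟩
    refine ⟨a * c + b * d * p, a * d + b * c + b * d * q, ?_⟩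
    push_cast
    linear_combination (b * d : S) * hξ
  algebraMap_mem' r := ⟨algebraMap R A r, 0, by simp⟩

variable {A}

theorem le_adjoinQuadratic (hξ : ξ ^ 2 = p + q * ξ) : A ≤ A.adjoinQuadratic hξ :=
  fun x hx => ⟨⟨x, hx⟩, 0, by simp⟩

theorem self_mem_adjoinQuadratic (hξ : ξ ^ 2 = p + q * ξ) : ξ ∈ A.adjoinQuadratic hξ :=
  ⟨0, 1, by simp⟩

theorem mul_mem_of_mem_adjoinQuadratic {hξ : ξ ^ 2 = p + q * ξ} {f g : A} (hfg : f * ξ = g)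
    {x : S} (hx : x ∈ A.adjoinQuadratic hξ) : f * x ∈ A := by
  obtain ⟨a, b, rfl⟩ := hx
  convert (f * a + b * g).2 using 1
  push_cast
  linear_combination (b : S) * hfg

theorem exists_sq_eq_of_mem_adjoinQuadratic {hξ : ξ ^ 2 = p + q * ξ} {x : S}
    (hx : x ∈ A.adjoinQuadratic hξ) : ∃ c d : A, x ^ 2 = c + x * d := by
  obtain ⟨a, b, rfl⟩ := hx
  refine ⟨b ^ 2 * p - a ^ 2 - a * b * q, a + a + b * q, ?_⟩
  push_cast
  linear_combination (b : S) ^ 2 * hξ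

end Subalgebra

theorem exists_mul_self_eq_of_sq_eq_span_mul {A : Type*} [CommRing A] {f g : A}
    (h : Ideal.span {f, g} ^ 2 = Ideal.span {f} * Ideal.span {f, g}) :
    ∃ p q : A, g * g = f * (p * f + q * g) := by
  have hg : g * g ∈ Ideal.span {f} * Ideal.span {f, g} := by
    rw [← h, sq]
    exact Ideal.mul_mem_mul (Ideal.subset_span (by simp)) (Ideal.subset_span (by simp))
  obtain ⟨z, hz, hfz⟩ := Ideal.mem_span_singleton_mul.mp hg
  obtain ⟨p, q, rfl⟩ := Ideal.mem_span_pair.mp hz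
  exact ⟨p, q, hfz.symm⟩

theorem sq_eq_add_mul_of_mul_eq {K : Type*} [CommRing K] [IsDomain K] {f g ξ p q : K}
    (hf : f ≠ 0) (hξ : f * ξ = g) (h : g * g = f * (p * f + q * g)) : ξ ^ 2 = p + q * ξ :=
  mul_left_cancel₀ (pow_ne_zero 2 hf) (by linear_combination h + (f * ξ + g - f * q) * hξ)

section SemigroupRing

variable {k}

theorem X_pow_notMem_adjoinQuadratic {S : AddSubmonoid ℕ} {ξ : PowerSeries k}
    {p q : semigroupRing k S} (hξ : ξ ^ 2 = p + q * ξ) {n : ℕ} (hn : n ∉ S)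
    (h2n : n + n ∉ S) :
    X ^ n ∉ (semigroupRing k S).adjoinQuadratic hξ := by
  intro hX
  obtain ⟨c, d, hcd⟩ := Subalgebra.exists_sq_eq_of_mem_adjoinQuadratic hX
  have := congrArg (coeff (n + n)) hcd
  rw [← pow_mul, mul_two, coeff_X_pow_self, map_add, coeff_X_pow_mul', if_pos le_self_add,
    Nat.add_sub_cancel, coeff_eq_zero_of_mem_semigroupRing c.2 h2n,
    coeff_eq_zero_of_mem_semigroupRing d.2 hn, add_zero] at this
  exact one_ne_zero this

theorem coe_ne_semigroupRing_of_X_pow_notMem {B : Subalgebra k (PowerSeries k)}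
    {ξ : PowerSeries k} (hξ : ξ ∈ B) {n : ℕ} (hn : order ξ = n) (hX : X ^ n ∉ B)
    (S : AddSubmonoid ℕ) : (B : Set (PowerSeries k)) ≠ semigroupRing k S := by
  intro h
  rw [← SetLike.mem_coe, h, SetLike.mem_coe] at hξ hX
  exact hX (X_pow_mem k (hξ n (order_eq_nat.mp hn).1))

end SemigroupRing

section BlowUp

variable {k} {ξ : PowerSeries k} {p q : A511 k} (hξ : ξ ^ 2 = p + q * ξ)

theorem valueSemigroup_adjoinQuadratic_A511 {f g : A511 k} (hfg : (f : PowerSeries k) * ξ = g)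
    (hf : order (f : PowerSeries k) = 20) (hξ6 : order ξ = 6) :
    valueSemigroup ((A511 k).adjoinQuadratic hξ) = AddSubmonoid.closure {5, 6} := by
  have h6 : 6 ∈ valueSemigroup ((A511 k).adjoinQuadratic hξ) :=
    mem_valueSemigroup (Subalgebra.self_mem_adjoinQuadratic hξ) hξ6
  refine le_antisymm (fun n hn => mem_closure_five_six_of_add_mem fun j _ => ?_) ?_
  · refine valueSemigroup_semigroupRing_le _ (add_mem_valueSemigroup_of_mul_mem hf
      (fun x hx => Subalgebra.mul_mem_of_mem_adjoinQuadratic hfg hx) (add_mem hn ?_))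
    simpa [mul_comm] using nsmul_mem h6 j
  · refine AddSubmonoid.closure_le.mpr (Set.insert_subset_iff.mpr ⟨?_, by simpa using h6⟩)
    exact mem_valueSemigroup (Subalgebra.le_adjoinQuadratic hξ (X_pow_mem k (mem511 1 0 rfl)))
      (order_X_pow 5)

theorem coe_adjoinQuadratic_A511_eq_closure_adjoin
    (hv : valueSemigroup ((A511 k).adjoinQuadratic hξ) = AddSubmonoid.closure {5, 6})
    (hξ6 : order ξ = 6) :
    ((A511 k).adjoinQuadratic hξ : Set (PowerSeries k)) =
      {x | ∀ m : ℕ, ∃ y ∈ Algebra.adjoin k ({(X : PowerSeries k) ^ 5, ξ} : Set (PowerSeries k)),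
        (X : PowerSeries k) ^ m ∣ (x - y)} := by
  set R := Algebra.adjoin k ({(X : PowerSeries k) ^ 5, ξ} : Set (PowerSeries k))
  have hX5 : X ^ 5 ∈ R := Algebra.subset_adjoin (by simp)
  have hξR : ξ ∈ R := Algebra.subset_adjoin (by simp)
  have hRB : R ≤ (A511 k).adjoinQuadratic hξ := Algebra.adjoin_le (Set.insert_subset_iff.mpr
    ⟨Subalgebra.le_adjoinQuadratic hξ (X_pow_mem k (mem511 1 0 rfl)),
      by simpa using Subalgebra.self_mem_adjoinQuadratic hξ⟩)
  have hvR : valueSemigroup ((A511 k).adjoinQuadratic hξ) ≤ valueSemigroup R := by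
    rw [hv, AddSubmonoid.closure_le, Set.insert_subset_iff, Set.singleton_subset_iff]
    exact ⟨mem_valueSemigroup hX5 (order_X_pow 5), mem_valueSemigroup hξR hξ6⟩
  ext x
  refine ⟨fun hx m => exists_mem_X_pow_dvd_sub hRB hvR hx m, fun hx => ?_⟩
  obtain ⟨y, hy, hxy⟩ := hx 40
  -- `t⁴⁰k⟦t⟧ ⊆ A`, as `39` is the Frobenius number of `⟨5, 11⟩`.
  have hxyA : x - y ∈ A511 k :=
    mem_semigroupRing_of_X_pow_dvd (fun _ => mem_closure_five_eleven_of_le) hxy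
  simpa using add_mem (Subalgebra.le_adjoinQuadratic hξ hxyA) (hRB hy)

theorem X_pow_six_notMem_adjoinQuadratic_A511 : X ^ 6 ∉ (A511 k).adjoinQuadratic hξ := by
  refine X_pow_notMem_adjoinQuadratic hξ ?_ ?_ <;>
  · simp only [AddSubmonoid.mem_closure_pair, smul_eq_mul, not_exists]
    omega

end BlowUp

theorem blowup_algebra_511_orders_20_26 (I : Ideal (A511 k)) (f g : A511 k)
    (hI : I = Ideal.span {f, g}) (hred : I ^ 2 = Ideal.span {f} * I)
    (hof : order (f : PowerSeries k) = 20) (hog : order (g : PowerSeries k) = 26)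
    (ξ : PowerSeries k) (hξ : (f : PowerSeries k) * ξ = (g : PowerSeries k))
    (B : Set (PowerSeries k))
    (hB : B = {x | ∃ a b : A511 k, x = (a : PowerSeries k) + (b : PowerSeries k) * ξ}) :
    {n : ℕ | ∃ h ∈ B, h ≠ 0 ∧ order h = n}
        = (AddSubmonoid.closure ({5, 6} : Set ℕ) : Set ℕ) ∧
    B = {x | ∀ m : ℕ, ∃ y ∈ Algebra.adjoin k ({(X : PowerSeries k) ^ 5, ξ} :
          Set (PowerSeries k)), (X : PowerSeries k) ^ m ∣ (x - y)} ∧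
    (X : PowerSeries k) ^ 6 ∉ B ∧
    ∀ S : AddSubmonoid ℕ, {n : ℕ | n ∉ S}.Finite →
      B ≠ (semigroupRing k S : Set (PowerSeries k)) := by
  subst hI hB
  obtain ⟨p, q, hpq⟩ := exists_mul_self_eq_of_sq_eq_span_mul hred
  have hf0 : (f : PowerSeries k) ≠ 0 := fun h => by simp [h] at hof
  have hquad : ξ ^ 2 = p + q * ξ :=
    sq_eq_add_mul_of_mul_eq hf0 hξ (by exact_mod_cast congrArg Subtype.val hpq)
  have hξ6 : order ξ = 6 := order_eq_of_mul_eq (a := 20) hof hog hξ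
  have hv := valueSemigroup_adjoinQuadratic_A511 hquad hξ hof hξ6
  have hX6 := X_pow_six_notMem_adjoinQuadratic_A511 hquad
  exact ⟨congrArg SetLike.coe hv, coe_adjoinQuadratic_A511_eq_closure_adjoin hquad hv hξ6, hX6,
    fun S _ => coe_ne_semigroupRing_of_X_pow_notMem
      (Subalgebra.self_mem_adjoinQuadratic hquad) hξ6 hX6 S⟩
end
end

section
/- Assume char(k) = 2. Let α, β, γ, δ, ε, τ ∈ k, and suppose that I = (t²⁰ + αt²¹ + βt²² + γt²⁷ + δt³³, t²⁶ + εt²⁷ + τt³³) is an Ulrich ideal of A = k⟦t⁵, t¹¹⟧ with I² = (t²⁰ + αt²¹ + βt²² + γt²⁷ + δt³³)·I. Then ε = 0, α ≠ 0, β = α², and γ = α⁷. -/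
noncomputable section

open PowerSeries

set_option synthInstance.maxHeartbeats 400000
set_option maxHeartbeats 800000

variable (k : Type*) [Field k]

/-! Since `I² = fI`, the element `g²` of `I²` can be written `g² = u f² + v f g` with `u, v ∈ A`.
In characteristic `2` the squares `f²` and `g²` have no cross terms, and comparing the coefficients
of `t⁴⁰, …, t⁵⁹` while using that `u` and `v` vanish in the gaps of `⟨5, 11⟩` leaves a small system
in `u₁₁, u₁₅, u₁₆, v₅, v₁₀, v₁₁`. From `(α + ε)v₅ = 1`, `β + αε = α²` and `βεv₅ = ε²` one gets
`ε(α + ε)² = 0`, so `ε = 0`; the remaining equations then give `αv₅(α⁷ - γ) = 0`. -/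

section

variable {k}

theorem coeff_eq_zero_of_notMem_semigroupRing {S : AddSubmonoid ℕ} {x : k⟦X⟧}
    (hx : x ∈ semigroupRing k S) {n : ℕ} (hn : n ∉ S) : coeff n x = 0 :=
  not_imp_comm.1 (hx n) hn

theorem coeff_A511_eq_zero (x : A511 k) {n : ℕ} (hn : ∀ a b : ℕ, a * 5 + b * 11 ≠ n) :
    coeff n (x : k⟦X⟧) = 0 := by
  refine coeff_eq_zero_of_notMem_semigroupRing x.2 fun h => ?_
  obtain ⟨a, b, hab⟩ := (AddSubmonoid.mem_closure_pair 5 11 n).1 h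
  exact hn a b (by simpa [smul_eq_mul] using hab)

theorem coeff_mul_C_mul_X_pow {R : Type*} [CommSemiring R] (x : R⟦X⟧) (c : R) (m n : ℕ) :
    coeff n (x * (C c * X ^ m)) = if m ≤ n then c * coeff (n - m) x else 0 := by
  rw [mul_left_comm, coeff_C_mul, coeff_mul_X_pow', mul_ite, mul_zero]

theorem Ideal.exists_mul_self_eq_of_span_pair_sq {R : Type*} [CommRing R] {f g : R}
    (h : Ideal.span {f, g} ^ 2 = Ideal.span {f} * Ideal.span {f, g}) :
    ∃ u v : R, g * g = u * (f * f) + v * (f * g) := by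
  have hg : g ∈ Ideal.span {f, g} := Ideal.subset_span (by simp)
  have hgg : g * g ∈ Ideal.span {f} * Ideal.span {f, g} :=
    h ▸ sq (Ideal.span {f, g}) ▸ Ideal.mul_mem_mul hg hg
  obtain ⟨c, hc, hfc⟩ := Ideal.mem_span_singleton_mul.1 hgg
  obtain ⟨u, v, rfl⟩ := Ideal.mem_span_pair.1 hc
  exact ⟨u, v, by rw [← hfc]; ring⟩

instance PowerSeries.charP {R : Type*} [CommSemiring R] (p : ℕ) [CharP R p] : CharP R⟦X⟧ p :=
  charP_of_injective_algebraMap C_injective p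

theorem coe_genF_mul_coe_genG (α β γ δ ε τ : k) :
    ((genF k α β γ δ : A511 k) : k⟦X⟧) * ((genG k ε τ : A511 k) : k⟦X⟧)
      = X^46 + C (α + ε) * X^47 + C (β + α * ε) * X^48 + C (β * ε) * X^49
        + C (γ + τ) * X^53 + C (α * τ + γ * ε) * X^54 + C (β * τ) * X^55
        + C δ * X^59 + C (γ * τ + δ * ε) * X^60 + C (δ * τ) * X^66 := by
  simp only [genF, genG, smul_eq_C_mul, map_add, map_mul]
  ring

section CharTwo

variable [CharP k 2]

theorem coe_genF_mul_self (α β γ δ : k) :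
    ((genF k α β γ δ : A511 k) : k⟦X⟧) * ((genF k α β γ δ : A511 k) : k⟦X⟧)
      = X^40 + C (α^2) * X^42 + C (β^2) * X^44 + C (γ^2) * X^54 + C (δ^2) * X^66 := by
  simp [← sq, genF, smul_eq_C_mul, CharTwo.add_sq, mul_pow, ← pow_mul]

theorem coe_genG_mul_self (ε τ : k) :
    ((genG k ε τ : A511 k) : k⟦X⟧) * ((genG k ε τ : A511 k) : k⟦X⟧)
      = X^52 + C (ε^2) * X^54 + C (τ^2) * X^66 := by
  simp [← sq, genG, smul_eq_C_mul, CharTwo.add_sq, mul_pow, ← pow_mul]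

theorem coeff_relations_of_genG_mul_self_eq {α β γ δ ε τ : k} {u v : A511 k}
    (h : genG k ε τ * genG k ε τ
      = u * (genF k α β γ δ * genF k α β γ δ) + v * (genF k α β γ δ * genG k ε τ)) :
    coeff 11 (u : k⟦X⟧) + coeff 5 (v : k⟦X⟧) = 0 ∧ (α + ε) * coeff 5 (v : k⟦X⟧) = 1 ∧
      α ^ 2 * coeff 11 (u : k⟦X⟧) + (β + α * ε) * coeff 5 (v : k⟦X⟧) = 0 ∧
      β * ε * coeff 5 (v : k⟦X⟧) = ε ^ 2 ∧
      coeff 15 (u : k⟦X⟧) + β ^ 2 * coeff 11 (u : k⟦X⟧) = 0 ∧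
      coeff 16 (u : k⟦X⟧) + coeff 10 (v : k⟦X⟧) = 0 ∧
      α ^ 2 * coeff 16 (u : k⟦X⟧) + (α + ε) * coeff 11 (v : k⟦X⟧)
        + (β + α * ε) * coeff 10 (v : k⟦X⟧) + (γ + τ) * coeff 5 (v : k⟦X⟧) = 0 ∧
      β ^ 2 * coeff 15 (u : k⟦X⟧) + (β + α * ε) * coeff 11 (v : k⟦X⟧)
        + β * ε * coeff 10 (v : k⟦X⟧) + (α * τ + γ * ε) * coeff 5 (v : k⟦X⟧) = 0 := by
  have hX := congrArg Subtype.val h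
  simp only [Subalgebra.coe_mul, Subalgebra.coe_add, coe_genF_mul_self, coe_genG_mul_self,
    coe_genF_mul_coe_genG] at hX
  have e := fun n => congrArg (coeff n) hX
  obtain ⟨e40, e45, e46, e50, e51, e52, e53, e54, e55, e56, e58, e59⟩ :
      _ ∧ _ ∧ _ ∧ _ ∧ _ ∧ _ ∧ _ ∧ _ ∧ _ ∧ _ ∧ _ ∧ _ :=
    ⟨e 40, e 45, e 46, e 50, e 51, e 52, e 53, e 54, e 55, e 56, e 58, e 59⟩
  simp (disch := omega) only [mul_add, LinearMap.map_add, coeff_mul_C_mul_X_pow, coeff_mul_X_pow',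
    coeff_X_pow, coeff_C, coeff_A511_eq_zero] at e40 e45 e46 e50 e51 e52 e53 e54 e55 e56 e58 e59
  norm_num at e40 e45 e46 e50 e51 e52 e53 e54 e55 e56 e58 e59
  simp only [← e40, ← e45, ← e46, ← e50, mul_zero, add_zero] at e51 e52 e53 e54 e55 e56 e58 e59
  exact ⟨by linear_combination -e51, by linear_combination -e52, by linear_combination -e53,
    by linear_combination -e54, by linear_combination -e55, by linear_combination -e56,
    by linear_combination -e58, by linear_combination -e59⟩

end CharTwo

theorem eq_pow_of_coeff_relations {R : Type*} [CommRing R] [IsDomain R] [CharP R 2]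
    {α β γ ε τ u₁₁ u₁₅ u₁₆ v₅ v₁₀ v₁₁ : R}
    (h₁ : u₁₁ + v₅ = 0) (h₂ : (α + ε) * v₅ = 1) (h₃ : α ^ 2 * u₁₁ + (β + α * ε) * v₅ = 0)
    (h₄ : β * ε * v₅ = ε ^ 2) (h₅ : u₁₅ + β ^ 2 * u₁₁ = 0) (h₆ : u₁₆ + v₁₀ = 0)
    (h₇ : α ^ 2 * u₁₆ + (α + ε) * v₁₁ + (β + α * ε) * v₁₀ + (γ + τ) * v₅ = 0)
    (h₈ : β ^ 2 * u₁₅ + (β + α * ε) * v₁₁ + β * ε * v₁₀ + (α * τ + γ * ε) * v₅ = 0) :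
    ε = 0 ∧ α ≠ 0 ∧ β = α ^ 2 ∧ γ = α ^ 7 := by
  have two : (2 : R) = 0 := CharTwo.two_eq_zero
  have hv₅ : v₅ ≠ 0 := right_ne_zero_of_mul_eq_one h₂
  have hαε : α + ε ≠ 0 := left_ne_zero_of_mul_eq_one h₂
  have hβ : β + α * ε = α ^ 2 :=
    sub_eq_zero.1 <| (mul_eq_zero.1 (by linear_combination h₃ - α ^ 2 * h₁)).resolve_right hv₅
  have hε : ε = 0 := by
    have : ε * (α + ε) ^ 2 = 0 := by
      linear_combination (α + ε) * h₄ - β * ε * h₂ - ε * hβ + (2 * α * ε ^ 2 + ε ^ 3) * two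
    exact (mul_eq_zero.1 this).resolve_right (pow_ne_zero 2 hαε)
  subst hε
  obtain rfl : β = α ^ 2 := by simpa using hβ
  refine ⟨rfl, by simpa using hαε, rfl, ?_⟩
  linear_combination (α ^ 7 - γ) * h₂ - h₈ + α * h₇ - α ^ 3 * h₆ + α ^ 4 * h₅ - α ^ 8 * h₁

end

theorem ulrich_511_orders_20_26_coeff_relations_char_two (hch : ringChar k = 2)
    (α β γ δ ε τ : k)
    (hred : (Ideal.span {genF k α β γ δ, genG k ε τ}) ^ 2
         = Ideal.span {genF k α β γ δ} * Ideal.span {genF k α β γ δ, genG k ε τ}) :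
    ε = 0 ∧ α ≠ 0 ∧ β = α ^ 2 ∧ γ = α ^ 7 := by
  have : CharP k 2 := ringChar.of_eq hch
  obtain ⟨u, v, h⟩ := Ideal.exists_mul_self_eq_of_span_pair_sq hred
  obtain ⟨h₁, h₂, h₃, h₄, h₅, h₆, h₇, h₈⟩ := coeff_relations_of_genG_mul_self_eq h
  exact eq_pow_of_coeff_relations h₁ h₂ h₃ h₄ h₅ h₆ h₇ h₈
end
end
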